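/- Let θ, σ, φ, ψ be differentiable real-valued functions on a real interval I satisfying the Einstein–Klein–Gordon evolution system, and define C(t) = σ(t)² + V(φ(t)) + ψ(t)²/2 − θ(t)²/3. If C(t₀) = 0 for some t₀ ∈ I, then C(t) = 0 for all t ∈ I; i.e., the Bianchi I constraint surface is preserved by the evolution. -/

import Mathlib

/-!
Along any solution, the constraint function obeys the linear equation
`C' = (-(2/3) θ + (2/√3) σ) C`, whose coefficient is continuous. By Grönwall's inequality a
solution of a linear scalar ODE that vanishes at one point vanishes on the whole interval.
-/

open Set

section LinearODE

variable {L f : ℝ → ℝ} {a b : ℝ}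

theorem eq_zero_of_hasDerivAt_mul_self_of_eq_zero_right (hL : ContinuousOn L (Icc a b))
    (hf : ∀ x ∈ Icc a b, HasDerivAt f (L x * f x) x) (ha : f a = 0) :
    ∀ x ∈ Icc a b, f x = 0 := by
  obtain ⟨K, hK⟩ := isCompact_Icc.exists_bound_of_continuousOn hL
  refine eq_zero_of_abs_deriv_le_mul_abs_self_of_eq_zero_right (K := K)
    (fun x hx => (hf x hx).continuousAt.continuousWithinAt)
    (fun x hx => (hf x (Ico_subset_Icc_self hx)).hasDerivWithinAt) ha fun x hx => ?_
  rw [norm_mul]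
  exact mul_le_mul_of_nonneg_right (hK x (Ico_subset_Icc_self hx)) (norm_nonneg _)

theorem eq_zero_of_hasDerivAt_mul_self_of_eq_zero_left (hL : ContinuousOn L (Icc a b))
    (hf : ∀ x ∈ Icc a b, HasDerivAt f (L x * f x) x) (hb : f b = 0) :
    ∀ x ∈ Icc a b, f x = 0 := by
  -- Time reversal `x ↦ -x` turns the problem into one with initial value at the left end.
  have hneg : MapsTo (fun x : ℝ => -x) (Icc (-b) (-a)) (Icc a b) := fun x hx =>
    ⟨le_neg_of_le_neg hx.2, neg_le_of_neg_le hx.1⟩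
  have hrev := eq_zero_of_hasDerivAt_mul_self_of_eq_zero_right (f := fun x => f (-x))
    (L := fun x => -L (-x)) (hL.comp continuousOn_neg hneg).neg
    (fun x hx => by
      simpa [Function.comp_def] using (hf (-x) (hneg hx)).comp x (hasDerivAt_neg x)) (by simpa)
  intro x hx
  simpa using hrev (-x) ⟨neg_le_neg hx.2, neg_le_neg hx.1⟩

theorem Set.OrdConnected.eq_zero_of_hasDerivAt_mul_self {I : Set ℝ} (hI : I.OrdConnected)
    (hL : ContinuousOn L I) (hf : ∀ x ∈ I, HasDerivAt f (L x * f x) x)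
    {x₀ : ℝ} (hx₀ : x₀ ∈ I) (h₀ : f x₀ = 0) : ∀ x ∈ I, f x = 0 := by
  intro x hx
  rcases le_total x₀ x with hle | hle
  · exact eq_zero_of_hasDerivAt_mul_self_of_eq_zero_right (hL.mono (hI.out hx₀ hx))
      (fun y hy => hf y (hI.out hx₀ hx hy)) h₀ x ⟨hle, le_rfl⟩
  · exact eq_zero_of_hasDerivAt_mul_self_of_eq_zero_left (hL.mono (hI.out hx hx₀))
      (fun y hy => hf y (hI.out hx hx₀ hy)) h₀ x ⟨le_rfl, hle⟩

end LinearODE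

noncomputable section BianchiI

def bianchiIConstraint (V θ σ φ ψ : ℝ → ℝ) (t : ℝ) : ℝ :=
  σ t ^ 2 + V (φ t) + ψ t ^ 2 / 2 - θ t ^ 2 / 3

def bianchiIConstraintRate (θ σ : ℝ → ℝ) (t : ℝ) : ℝ :=
  -(2 / 3) * θ t + 2 / Real.sqrt 3 * σ t

theorem hasDerivAt_bianchiIConstraint {V θ σ φ ψ : ℝ → ℝ} {t θ' σ' ψ' : ℝ}
    (hV : DifferentiableAt ℝ V (φ t)) (hθ : HasDerivAt θ θ' t) (hσ : HasDerivAt σ σ' t)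
    (hφ : HasDerivAt φ (ψ t) t) (hψ : HasDerivAt ψ ψ' t)
    (eθ : θ' = -(1 / 3) * θ t ^ 2 - 2 * σ t ^ 2 + V (φ t) - ψ t ^ 2)
    (eσ : σ' = -θ t ^ 2 / (3 * Real.sqrt 3) - θ t * σ t
        + σ t ^ 2 / Real.sqrt 3 + (1 / Real.sqrt 3) * (V (φ t) + ψ t ^ 2 / 2))
    (eψ : ψ' = -θ t * ψ t - deriv V (φ t)) :
    HasDerivAt (bianchiIConstraint V θ σ φ ψ)
      (bianchiIConstraintRate θ σ t * bianchiIConstraint V θ σ φ ψ t) t := by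
  have hchain : HasDerivAt (bianchiIConstraint V θ σ φ ψ)
      (2 * σ t * σ' + deriv V (φ t) * ψ t + ψ t * ψ' - 2 * θ t * θ' / 3) t := by
    refine ((((hσ.fun_pow 2).fun_add (hV.hasDerivAt.comp t hφ)).fun_add
      ((hψ.fun_pow 2).div_const 2)).fun_sub ((hθ.fun_pow 2).div_const 3)).congr_deriv ?_
    norm_num
    ring
  refine hchain.congr_deriv ?_
  rw [eθ, eσ, eψ, bianchiIConstraintRate, bianchiIConstraint]
  field_simp
  ring

end BianchiI

theorem bianchiI_constraint_preserved
    (V : ℝ → ℝ) (hV : Differentiable ℝ V)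
    (I : Set ℝ) (hI : I.OrdConnected)
    (θ σ φ ψ : ℝ → ℝ)
    (hθ : ∀ t ∈ I, DifferentiableAt ℝ θ t) (hσ : ∀ t ∈ I, DifferentiableAt ℝ σ t)
    (hφ : ∀ t ∈ I, DifferentiableAt ℝ φ t) (hψ : ∀ t ∈ I, DifferentiableAt ℝ ψ t)
    (eθ : ∀ t ∈ I, deriv θ t = -(1 / 3) * θ t ^ 2 - 2 * σ t ^ 2 + V (φ t) - ψ t ^ 2)
    (eσ : ∀ t ∈ I, deriv σ t = -θ t ^ 2 / (3 * Real.sqrt 3) - θ t * σ t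
        + σ t ^ 2 / Real.sqrt 3 + (1 / Real.sqrt 3) * (V (φ t) + ψ t ^ 2 / 2))
    (eφ : ∀ t ∈ I, deriv φ t = ψ t)
    (eψ : ∀ t ∈ I, deriv ψ t = -θ t * ψ t - deriv V (φ t))
    (C : ℝ → ℝ)
    (hC : ∀ t, C t = σ t ^ 2 + V (φ t) + ψ t ^ 2 / 2 - θ t ^ 2 / 3)
    (t₀ : ℝ) (ht₀ : t₀ ∈ I) (hC₀ : C t₀ = 0) :
    ∀ t ∈ I, C t = 0 := by
  obtain rfl : C = bianchiIConstraint V θ σ φ ψ := funext hC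
  have hrate : ContinuousOn (bianchiIConstraintRate θ σ) I := fun t ht =>
    (((hθ t ht).continuousAt.const_mul _).add
      ((hσ t ht).continuousAt.const_mul _)).continuousWithinAt
  refine hI.eq_zero_of_hasDerivAt_mul_self hrate (fun t ht => ?_) ht₀ hC₀
  refine hasDerivAt_bianchiIConstraint (hV _) (hθ t ht).hasDerivAt (hσ t ht).hasDerivAt
    ?_ (hψ t ht).hasDerivAt (eθ t ht) (eσ t ht) (eψ t ht)
  simpa only [eφ t ht] using (hφ t ht).hasDerivAt
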